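/- Let 𝒳 be a strongly connected directed graph with loop number t ≥ 1. For any two vertices a and b there exists m ∈ ℕ such that for every i ∈ ℕ there is a walk from a to b of length m + i·t. -/
import Mathlib


/-- `hasWalk E m a b` means there is a walk of length `m` from `a` to `b`
in the directed graph with edge relation `E` (walks of length 0 allowed). -/
def hasWalk {V : Type*} (E : V → V → Prop) : ℕ → V → V → Prop
  | 0 => fun a b => a = b
  | m + 1 => fun a b => ∃ c, E a c ∧ hasWalk E m c b

/-- A directed graph is strongly connected if there is a walk between any
two vertices. -/
def StronglyConnected {V : Type*} (E : V → V → Prop) : Prop :=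
  ∀ a b : V, ∃ m, hasWalk E m a b

/-- The loop number at a vertex `a`: the minimum `t ≥ 1` arising as the
difference of lengths of two closed walks at `a`, and `0` if there is no
closed walk of length `≥ 1` at `a` (so no such difference exists). -/
noncomputable def loopNumAt {V : Type*} (E : V → V → Prop) (a : V) : ℕ :=
  sInf {t | 1 ≤ t ∧ ∃ p q, hasWalk E p a a ∧ hasWalk E q a a ∧ p = q + t}

/-- Evaluation of a monomial coordinate function: `none` is the constant 0,
`some S` is the square-free monomial `∏ j ∈ S, x j` (empty product = 1). -/
def monEval {ι : Type*} (c : Option (Finset ι)) (x : ι → ZMod 2) : ZMod 2 :=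
  match c with
  | none => 0
  | some S => ∏ j ∈ S, x j

/-- The Boolean monomial system determined by the coordinate data `M`. -/
def sysEval {ι : Type*} (M : ι → Option (Finset ι)) (x : ι → ZMod 2) : ι → ZMod 2 :=
  fun i => monEval (M i) x

/-- Edge relation of the dependency graph of a Boolean monomial system:
`i → j` iff `f i ≠ 0` and `x j` is a factor of `f i`. -/
def depEdge {ι : Type*} (M : ι → Option (Finset ι)) (i j : ι) : Prop :=
  ∃ S, M i = some S ∧ j ∈ S

/-- A map is a fixed point system if every trajectory reaches a fixed point. -/
def FixedPointSystem {α : Type*} (F : α → α) : Prop :=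
  ∀ a, ∃ m, F^[m + 1] a = F^[m] a

/-- A glueing of the Boolean monomial system `M₂` (in variables `y`) to the
Boolean monomial system `M₁` (in variables `x`): the `x`-coordinates are
those of `M₁`, and the `i`-th `y`-coordinate is `g i` multiplied by the
monomial in the `x`-variables given by `T i` (and is `0` when `g i = 0`). -/
def glue {r s : ℕ} (M₁ : Fin r → Option (Finset (Fin r)))
    (M₂ : Fin s → Option (Finset (Fin s))) (T : Fin s → Finset (Fin r)) :
    (Fin r ⊕ Fin s) → Option (Finset (Fin r ⊕ Fin s))
  | .inl i => (M₁ i).map (Finset.image Sum.inl)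
  | .inr i => (M₂ i).map (fun S => S.image Sum.inr ∪ (T i).image Sum.inl)

lemma hasWalk_trans {V : Type*} {E : V → V → Prop} :
    ∀ {m n : ℕ} {a b c : V}, hasWalk E m a b → hasWalk E n b c → hasWalk E (m + n) a c := by
  intro m
  induction m with
  | zero => intro n a b c h1 h2; cases h1; simpa using h2
  | succ m ih =>
    intro n a b c h1 h2
    obtain ⟨d, hd, hw⟩ := h1
    rw [Nat.succ_add]
    exact ⟨d, hd, ih hw h2⟩

lemma hasWalk_mul {V : Type*} {E : V → V → Prop} {q : ℕ} {a : V}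
    (h : hasWalk E q a a) : ∀ k, hasWalk E (k * q) a a := by
  intro k
  induction k with
  | zero => simp [hasWalk]
  | succ k ih => rw [Nat.succ_mul]; exact hasWalk_trans ih h

/-- In a strongly connected graph with loop number `t ≥ 1`, for
any two vertices `a, b` there is an `m` such that for every `i` there is a
walk from `a` to `b` of length `m + i·t`. -/
theorem statement6 {V : Type*} [Nonempty V] (E : V → V → Prop)
    (hsc : StronglyConnected E) (t : ℕ) (ht : 1 ≤ t)
    (hloop : ∀ a, loopNumAt E a = t) (a b : V) :
    ∃ m : ℕ, ∀ i : ℕ, hasWalk E (m + i * t) a b := by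
  set S : Set ℕ :=
    {t' | 1 ≤ t' ∧ ∃ p q, hasWalk E p a a ∧ hasWalk E q a a ∧ p = q + t'} with hS
  have hsinf : sInf S = t := hloop a
  have hne : S.Nonempty := by
    by_contra h
    rw [Set.not_nonempty_iff_eq_empty] at h
    rw [h, Nat.sInf_empty] at hsinf
    omega
  have htS : t ∈ S := hsinf ▸ Nat.sInf_mem hne
  obtain ⟨-, p, q, hp, hq, hpq⟩ := htS
  have hmin : ∀ d ∈ S, t ≤ d := fun d hd => hsinf ▸ Nat.sInf_le hd
  -- `t` divides `q`
  set u := q / t with hu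
  obtain ⟨r, hq', hrlt⟩ : ∃ r, q = u * t + r ∧ r < t :=
    ⟨q % t, by rw [hu, Nat.mul_comm]; exact (Nat.div_add_mod q t).symm,
      Nat.mod_lt q (show 0 < t by omega)⟩
  have hdvd : r = 0 := by
    by_contra hr
    have hin : r ∈ S := by
      refine ⟨by omega, (u + 1) * q, u * p, hasWalk_mul hq _, hasWalk_mul hp _, ?_⟩
      rw [hpq, hq']
      ring
    have h1 := hmin _ hin
    omega
  have hqut : q = u * t := by omega
  -- closed walks of length `n * t` for all `n ≥ u * u`
  have key : ∀ n : ℕ, u * u ≤ n → hasWalk E (n * t) a a := by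
    intro n hn
    rcases Nat.eq_zero_or_pos u with hu0 | hu1
    · -- q = 0, p = t
      have : n * t = n * p := by rw [hpq, hqut, hu0]; ring
      rw [this]; exact hasWalk_mul hp n
    · set s := n / u with hs
      set r := n % u with hr
      have hsr : n = s * u + r := by
        rw [hs, hr, Nat.mul_comm]; exact (Nat.div_add_mod n u).symm
      have hrlt : r < u := Nat.mod_lt n hu1
      have hsu : u ≤ s := (Nat.le_div_iff_mul_le hu1).mpr hn
      obtain ⟨d, hd⟩ : ∃ d, s = r + d := ⟨s - r, by omega⟩
      have heq : n * t = r * p + (s - r) * q := by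
        rw [hpq, hqut, hsr, hd, show r + d - r = d from by omega]
        ring
      rw [heq]
      exact hasWalk_trans (hasWalk_mul hp r) (hasWalk_mul hq (s - r))
  obtain ⟨w, hw⟩ := hsc a b
  refine ⟨u * u * t + w, fun i => ?_⟩
  have h1 : hasWalk E ((u * u + i) * t + w) a b :=
    hasWalk_trans (key (u * u + i) (by omega)) hw
  have h2 : u * u * t + w + i * t = (u * u + i) * t + w := by ring
  rw [h2]
  exact h1
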